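/- arXiv:1510.09051 — 10 statements merged into one kernel-verified Lean document; each statement's English description precedes it below -/
import Mathlib

section
/- The second and third pieces of the cubic trigonometric B-spline join continuously at the knot 2h, where their common value equals a2: P2(2h) = P3(2h) = 2/(1 + 2cos(h)). -/
/-! At the middle knot `x = 2h` both pieces reduce to `2 sin h sin²(h/2) / ω`, and the identity
`sin (3h/2) = sin (h/2) (1 + 2 cos h)` cancels `ω` down to `2 / (1 + 2 cos h)`. -/

open Real

lemma Real.sin_three_mul_eq_sin_mul (x : ℝ) : sin (3 * x) = sin x * (1 + 2 * cos (2 * x)) := by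
  rw [sin_three_mul, cos_two_mul, cos_sq']
  ring

lemma two_mul_sin_mul_sin_half_sq_div_eq (h : ℝ) (hs : sin (h / 2) ≠ 0) (hsh : sin h ≠ 0) :
    2 * sin h * sin (h / 2) ^ 2 / (sin (h / 2) * sin h * sin (3 * h / 2)) =
      2 / (1 + 2 * cos h) := by
  have hsin3 : sin (3 * h / 2) = sin (h / 2) * (1 + 2 * cos h) := by
    rw [show 3 * h / 2 = 3 * (h / 2) by ring, sin_three_mul_eq_sin_mul, mul_div_cancel₀ h two_ne_zero]
  have hc : sin h * sin (h / 2) ^ 2 ≠ 0 := mul_ne_zero hsh (pow_ne_zero 2 hs)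
  rw [hsin3, ← mul_div_mul_left 2 (1 + 2 * cos h) hc]
  ring

theorem stmt_1 (h : ℝ) (h0 : 0 < h) (h1 : h < 2 * Real.pi / 3)
    (ω : ℝ) (hω : ω = Real.sin (h / 2) * Real.sin h * Real.sin (3 * h / 2))
    (P2 : ℝ → ℝ) (hP2 : P2 = fun x => (Real.sin (x / 2) * (Real.sin (x / 2) * Real.sin ((2 * h - x) / 2) + Real.sin ((3 * h - x) / 2) * Real.sin ((x - h) / 2)) + Real.sin ((4 * h - x) / 2) * Real.sin ((x - h) / 2) ^ 2) / ω)
    (P3 : ℝ → ℝ) (hP3 : P3 = fun x => (Real.sin ((4 * h - x) / 2) * (Real.sin ((x - h) / 2) * Real.sin ((3 * h - x) / 2) + Real.sin ((4 * h - x) / 2) * Real.sin ((x - 2 * h) / 2)) + Real.sin (x / 2) * Real.sin ((3 * h - x) / 2) ^ 2) / ω)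
    : P2 (2 * h) = 2 / (1 + 2 * Real.cos h) ∧ P3 (2 * h) = 2 / (1 + 2 * Real.cos h) := by
  have hs : sin (h / 2) ≠ 0 := (sin_pos_of_pos_of_lt_pi (by linarith) (by linarith [pi_pos])).ne'
  have hsh : sin h ≠ 0 := (sin_pos_of_pos_of_lt_pi h0 (by linarith [pi_pos])).ne'
  rw [← two_mul_sin_mul_sin_half_sq_div_eq h hs hsh, ← hω]
  subst hP2 hP3
  have hmid : (2 * h - h) / 2 = h / 2 ∧ (3 * h - 2 * h) / 2 = h / 2 ∧ (4 * h - 2 * h) / 2 = h ∧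
      2 * h / 2 = h := by refine ⟨?_, ?_, ?_, ?_⟩ <;> ring
  simp only [hmid, sub_self, zero_div, sin_zero]
  constructor <;> ring_nf
end

section
/- The first derivatives of the first two pieces of the cubic trigonometric B-spline agree at the knot h, where their common value is 3/(4·sin(3h/2)): (deriv P1)(h) = (deriv P2)(h) = 3/(4·sin(3h/2)). -/
open Real

/-!
At the knot `h` the factor `sin ((x - h) / 2)` of `P2` vanishes, so every product-rule term in
which it survives undifferentiated drops out (in particular the whole term with its square).
Both derivatives then reduce to `(3 / 2) sin² (h / 2) cos (h / 2) / ω`, and `sin h = 2 sin (h / 2) cos (h / 2)` turns this into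
`3 / (4 sin (3h / 2))`.
-/

theorem sin_eq_two_mul_sin_div_two_mul_cos_div_two (x : ℝ) :
    sin x = 2 * sin (x / 2) * cos (x / 2) := by
  rw [← sin_two_mul, mul_div_cancel₀ x two_ne_zero]

theorem HasDerivAt.sin_div_two {f : ℝ → ℝ} {f' x : ℝ} (hf : HasDerivAt f f' x) :
    HasDerivAt (fun y => Real.sin (f y / 2)) (Real.cos (f x / 2) * (f' / 2)) x :=
  (hf.div_const 2).sin

theorem HasDerivAt.mul_of_eq_zero {f g : ℝ → ℝ} {f' g' x : ℝ} (hf : HasDerivAt f f' x)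
    (hg : HasDerivAt g g' x) (hgx : g x = 0) :
    HasDerivAt (fun y => f y * g y) (f x * g') x :=
  (hf.mul hg).congr_deriv (by simp [hgx])

theorem HasDerivAt.mul_sq_of_eq_zero {f g : ℝ → ℝ} {f' g' x : ℝ} (hf : HasDerivAt f f' x)
    (hg : HasDerivAt g g' x) (hgx : g x = 0) :
    HasDerivAt (fun y => f y * g y ^ 2) 0 x :=
  (hf.mul (hg.pow 2)).congr_deriv (by simp [hgx])

theorem hasDerivAt_sin_div_two_pow_three (x : ℝ) :
    HasDerivAt (fun y => sin (y / 2) ^ 3) (3 / 2 * sin (x / 2) ^ 2 * cos (x / 2)) x := by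
  refine ((hasDerivAt_id' x).sin_div_two.pow 3).congr_deriv ?_
  ring

theorem hasDerivAt_bsplinePieceTwo_numerator_at_knot (h : ℝ) :
    HasDerivAt (fun x => sin (x / 2) * (sin (x / 2) * sin ((2 * h - x) / 2) +
        sin ((3 * h - x) / 2) * sin ((x - h) / 2)) + sin ((4 * h - x) / 2) * sin ((x - h) / 2) ^ 2)
      (3 / 2 * sin (h / 2) ^ 2 * cos (h / 2)) h := by
  have hsin : HasDerivAt (fun x => sin (x / 2)) (cos (h / 2) * (1 / 2)) h :=
    (hasDerivAt_id' h).sin_div_two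
  have hsin_rev : ∀ c : ℝ,
      HasDerivAt (fun x => sin ((c - x) / 2)) (cos ((c - h) / 2) * (-1 / 2)) h := fun c => by
    simpa using ((hasDerivAt_id' h).const_sub c).sin_div_two
  have hsin_knot : HasDerivAt (fun x => sin ((x - h) / 2)) (1 / 2) h := by
    simpa using ((hasDerivAt_id' h).sub_const h).sin_div_two
  have hknot : sin ((h - h) / 2) = 0 := by simp
  have hA := (hsin.mul (hsin_rev (2 * h))).add ((hsin_rev (3 * h)).mul_of_eq_zero hsin_knot hknot)
  refine ((hsin.mul hA).add ((hsin_rev (4 * h)).mul_sq_of_eq_zero hsin_knot hknot)).congr_deriv ?_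
  simp only [Pi.add_apply, Pi.mul_apply, show (2 * h - h) / 2 = h / 2 by ring,
    show (3 * h - h) / 2 = h by ring, hknot, mul_zero, add_zero,
    sin_eq_two_mul_sin_div_two_mul_cos_div_two h]
  ring

theorem three_div_two_mul_sin_div_two_sq_mul_cos_div_two_div {h : ℝ}
    (hω : sin (h / 2) * sin h * sin (3 * h / 2) ≠ 0) :
    3 / 2 * sin (h / 2) ^ 2 * cos (h / 2) / (sin (h / 2) * sin h * sin (3 * h / 2))
      = 3 / (4 * sin (3 * h / 2)) := by
  rw [sin_eq_two_mul_sin_div_two_mul_cos_div_two h] at hω ⊢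
  obtain ⟨hs, hc, hs3⟩ : sin (h / 2) ≠ 0 ∧ cos (h / 2) ≠ 0 ∧ sin (3 * h / 2) ≠ 0 := by
    refine ⟨?_, ?_, ?_⟩ <;> intro h0 <;> simp [h0] at hω
  field_simp
  ring

theorem sin_div_two_mul_sin_mul_sin_three_mul_div_two_pos {h : ℝ} (h0 : 0 < h)
    (h1 : h < 2 * π / 3) : 0 < sin (h / 2) * sin h * sin (3 * h / 2) := by
  have hpi := pi_pos
  have := sin_pos_of_pos_of_lt_pi (x := h / 2) (by linarith) (by linarith)
  have := sin_pos_of_pos_of_lt_pi h0 (by linarith)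
  have := sin_pos_of_pos_of_lt_pi (x := 3 * h / 2) (by linarith) (by linarith)
  positivity

theorem stmt_3 (h : ℝ) (h0 : 0 < h) (h1 : h < 2 * Real.pi / 3)
    (ω : ℝ) (hω : ω = Real.sin (h / 2) * Real.sin h * Real.sin (3 * h / 2))
    (P1 : ℝ → ℝ) (hP1 : P1 = fun x => Real.sin (x / 2) ^ 3 / ω)
    (P2 : ℝ → ℝ) (hP2 : P2 = fun x => (Real.sin (x / 2) * (Real.sin (x / 2) * Real.sin ((2 * h - x) / 2) + Real.sin ((3 * h - x) / 2) * Real.sin ((x - h) / 2)) + Real.sin ((4 * h - x) / 2) * Real.sin ((x - h) / 2) ^ 2) / ω)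
    : deriv P1 h = 3 / (4 * Real.sin (3 * h / 2)) ∧ deriv P2 h = 3 / (4 * Real.sin (3 * h / 2)) := by
  have hvalue : 3 / 2 * sin (h / 2) ^ 2 * cos (h / 2) / ω = 3 / (4 * sin (3 * h / 2)) := by
    rw [hω]
    exact three_div_two_mul_sin_div_two_sq_mul_cos_div_two_div
      (sin_div_two_mul_sin_mul_sin_three_mul_div_two_pos h0 h1).ne'
  subst hP1 hP2
  exact ⟨((hasDerivAt_sin_div_two_pow_three h).div_const ω).deriv.trans hvalue,
    ((hasDerivAt_bsplinePieceTwo_numerator_at_knot h).div_const ω).deriv.trans hvalue⟩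
end

section
/- The first derivatives of the second and third pieces of the cubic trigonometric B-spline agree at the knot 2h, where their common value is zero: (deriv P2)(2h) = (deriv P3)(2h) = 0. -/
/-!
The third piece is the mirror image of the second about the centre `2h` of the support,
`P3 x = P2 (4h - x)`, so `P3'(2h) = -P2'(2h)` and it suffices to show `P2'(2h) = 0`. At `x = 2h`
the product rule gives, for the numerator of `P2`, the value `-sin² h / 2 + sin h sin (h/2) cos (h/2)`,
which vanishes by the double-angle formula.
-/

open Real

lemma hasDerivAt_sin_sub_div_two (a x : ℝ) :
    HasDerivAt (fun x => sin ((x - a) / 2)) (cos ((x - a) / 2) / 2) x := by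
  convert (((hasDerivAt_id' x).sub_const a).div_const 2).sin using 1
  ring

lemma hasDerivAt_sin_const_sub_div_two (a x : ℝ) :
    HasDerivAt (fun x => sin ((a - x) / 2)) (-(cos ((a - x) / 2) / 2)) x := by
  simpa using (hasDerivAt_sin_sub_div_two 0 (a - x)).comp_const_sub a x

/-- Numerator of the second piece `P2` of the cubic trigonometric B-spline with knot spacing `h`. -/
noncomputable def trigBSplineNum₂ (h x : ℝ) : ℝ :=
  sin (x / 2) * (sin (x / 2) * sin ((2 * h - x) / 2) + sin ((3 * h - x) / 2) * sin ((x - h) / 2))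
    + sin ((4 * h - x) / 2) * sin ((x - h) / 2) ^ 2

lemma trigBSplineNum₂_const_sub (h x : ℝ) :
    trigBSplineNum₂ h (4 * h - x) =
      sin ((4 * h - x) / 2) * (sin ((x - h) / 2) * sin ((3 * h - x) / 2)
        + sin ((4 * h - x) / 2) * sin ((x - 2 * h) / 2)) + sin (x / 2) * sin ((3 * h - x) / 2) ^ 2 := by
  have e₁ : (2 * h - (4 * h - x)) / 2 = (x - 2 * h) / 2 := by ring
  have e₂ : (3 * h - (4 * h - x)) / 2 = (x - h) / 2 := by ring
  have e₃ : (4 * h - x - h) / 2 = (3 * h - x) / 2 := by ring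
  rw [trigBSplineNum₂, e₁, e₂, e₃, sub_sub_cancel]
  ring

lemma hasDerivAt_trigBSplineNum₂_two_mul (h : ℝ) :
    HasDerivAt (trigBSplineNum₂ h) 0 (2 * h) := by
  have hs : HasDerivAt (fun x => sin (x / 2)) (cos (2 * h / 2) / 2) (2 * h) := by
    simpa using hasDerivAt_sin_sub_div_two 0 (2 * h)
  have hu := hasDerivAt_sin_const_sub_div_two (2 * h) (2 * h)
  have hv := hasDerivAt_sin_const_sub_div_two (3 * h) (2 * h)
  have hw := hasDerivAt_sin_sub_div_two h (2 * h)
  have hz := hasDerivAt_sin_const_sub_div_two (4 * h) (2 * h)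
  refine HasDerivAt.congr_deriv (f := trigBSplineNum₂ h)
    ((hs.mul ((hs.mul hu).add (hv.mul hw))).add (hz.mul (hw.pow 2))) ?_
  have e₀ : (2 * h - 2 * h) / 2 = 0 := by ring
  have e₁ : 2 * h / 2 = h := by ring
  have e₂ : (3 * h - 2 * h) / 2 = h / 2 := by ring
  have e₃ : (2 * h - h) / 2 = h / 2 := by ring
  have e₄ : (4 * h - 2 * h) / 2 = h := by ring
  have double_angle : sin h = 2 * sin (h / 2) * cos (h / 2) := by
    rw [← sin_two_mul, mul_div_cancel₀ h two_ne_zero]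
  simp only [Pi.mul_apply, Pi.add_apply, e₀, e₁, e₂, e₃, e₄, sin_zero, cos_zero]
  rw [double_angle]
  ring

theorem stmt_4_general (h : ℝ)
    (ω : ℝ)
    (P2 : ℝ → ℝ) (hP2 : P2 = fun x => (Real.sin (x / 2) * (Real.sin (x / 2) * Real.sin ((2 * h - x) / 2) + Real.sin ((3 * h - x) / 2) * Real.sin ((x - h) / 2)) + Real.sin ((4 * h - x) / 2) * Real.sin ((x - h) / 2) ^ 2) / ω)
    (P3 : ℝ → ℝ) (hP3 : P3 = fun x => (Real.sin ((4 * h - x) / 2) * (Real.sin ((x - h) / 2) * Real.sin ((3 * h - x) / 2) + Real.sin ((4 * h - x) / 2) * Real.sin ((x - 2 * h) / 2)) + Real.sin (x / 2) * Real.sin ((3 * h - x) / 2) ^ 2) / ω)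
    : deriv P2 (2 * h) = 0 ∧ deriv P3 (2 * h) = 0 := by
  have hP2' : P2 = fun x => trigBSplineNum₂ h x / ω := hP2
  have hP3' : P3 = fun x => trigBSplineNum₂ h (4 * h - x) / ω := by
    rw [hP3]
    simp only [trigBSplineNum₂_const_sub]
  have hN := (hasDerivAt_trigBSplineNum₂_two_mul h).deriv
  have hmirror : 4 * h - 2 * h = 2 * h := by ring
  subst hP2' hP3'
  refine ⟨?_, ?_⟩
  · rw [deriv_div_const, hN, zero_div]
  · rw [deriv_div_const, deriv_comp_const_sub, hmirror, hN, neg_zero, zero_div]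

theorem stmt_4 (h : ℝ) (h0 : 0 < h) (h1 : h < 2 * Real.pi / 3)
    (ω : ℝ) (hω : ω = Real.sin (h / 2) * Real.sin h * Real.sin (3 * h / 2))
    (P2 : ℝ → ℝ) (hP2 : P2 = fun x => (Real.sin (x / 2) * (Real.sin (x / 2) * Real.sin ((2 * h - x) / 2) + Real.sin ((3 * h - x) / 2) * Real.sin ((x - h) / 2)) + Real.sin ((4 * h - x) / 2) * Real.sin ((x - h) / 2) ^ 2) / ω)
    (P3 : ℝ → ℝ) (hP3 : P3 = fun x => (Real.sin ((4 * h - x) / 2) * (Real.sin ((x - h) / 2) * Real.sin ((3 * h - x) / 2) + Real.sin ((4 * h - x) / 2) * Real.sin ((x - 2 * h) / 2)) + Real.sin (x / 2) * Real.sin ((3 * h - x) / 2) ^ 2) / ω)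
    : deriv P2 (2 * h) = 0 ∧ deriv P3 (2 * h) = 0 :=
  stmt_4_general h ω P2 hP2 P3 hP3
end

section
/- The second derivatives of the first two pieces of the cubic trigonometric B-spline agree at the knot h, where their common value equals a5: (deriv (deriv P1))(h) = (deriv (deriv P2))(h) = 3(1 + 3cos(h))/(16·sin²(h/2)·(2cos(h/2) + cos(3h/2))). -/
/-!
The second piece is the first one plus a multiple of the trigonometric truncated power
`sin³((x - h)/2)`, which vanishes to third order at `h`. So the two pieces agree to second order
at `h`, and the common second derivative is that of `sin³(x/2)/ω`.
-/

open Real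

lemma hasDerivAt_sin_half_sub (a x : ℝ) :
    HasDerivAt (fun y => sin ((y - a) / 2)) (cos ((x - a) / 2) / 2) x := by
  simpa [div_eq_mul_inv] using (((hasDerivAt_id x).sub_const a).div_const 2).sin

lemma hasDerivAt_cos_half_sub (a x : ℝ) :
    HasDerivAt (fun y => cos ((y - a) / 2)) (-sin ((x - a) / 2) / 2) x := by
  simpa [div_eq_mul_inv] using (((hasDerivAt_id x).sub_const a).div_const 2).cos

lemma hasDerivAt_sin_half_sub_pow_three (a x : ℝ) :
    HasDerivAt (fun y => sin ((y - a) / 2) ^ 3)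
      (3 / 2 * sin ((x - a) / 2) ^ 2 * cos ((x - a) / 2)) x :=
  ((hasDerivAt_sin_half_sub a x).fun_pow 3).congr_deriv (by norm_num; ring)

lemma hasDerivAt_sin_half_sub_sq_mul_cos (a x : ℝ) :
    HasDerivAt (fun y => 3 / 2 * sin ((y - a) / 2) ^ 2 * cos ((y - a) / 2))
      (3 / 4 * sin ((x - a) / 2) * (2 * cos ((x - a) / 2) ^ 2 - sin ((x - a) / 2) ^ 2)) x :=
  ((((hasDerivAt_sin_half_sub a x).fun_pow 2).const_mul (3 / 2)).fun_mul
    (hasDerivAt_cos_half_sub a x)).congr_deriv (by norm_num; ring)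

theorem deriv_deriv_sin_half_sub_pow_three_add_mul_div (a b κ ω : ℝ) :
    deriv (deriv fun x => (sin ((x - a) / 2) ^ 3 + κ * sin ((x - b) / 2) ^ 3) / ω) b
      = 3 / 4 * sin ((b - a) / 2) * (2 * cos ((b - a) / 2) ^ 2 - sin ((b - a) / 2) ^ 2) / ω := by
  have hderiv : deriv (fun x => (sin ((x - a) / 2) ^ 3 + κ * sin ((x - b) / 2) ^ 3) / ω)
      = fun x => (3 / 2 * sin ((x - a) / 2) ^ 2 * cos ((x - a) / 2)
          + κ * (3 / 2 * sin ((x - b) / 2) ^ 2 * cos ((x - b) / 2))) / ω :=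
    funext fun x => (((hasDerivAt_sin_half_sub_pow_three a x).fun_add
      ((hasDerivAt_sin_half_sub_pow_three b x).const_mul κ)).div_const ω).deriv
  rw [hderiv, (((hasDerivAt_sin_half_sub_sq_mul_cos a b).fun_add
    ((hasDerivAt_sin_half_sub_sq_mul_cos b b).const_mul κ)).div_const ω).deriv]
  simp

theorem trig_bspline_second_piece_eq (h x : ℝ) :
    sin (x / 2) * (sin (x / 2) * sin ((2 * h - x) / 2) + sin ((3 * h - x) / 2) * sin ((x - h) / 2))
        + sin ((4 * h - x) / 2) * sin ((x - h) / 2) ^ 2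
      = sin (x / 2) ^ 3 - 4 * cos h * cos (h / 2) * sin ((x - h) / 2) ^ 3 := by
  have hx := sin_sq_add_cos_sq (x / 2)
  have hh := sin_sq_add_cos_sq (h / 2)
  rw [show (2 * h - x) / 2 = 2 * (h / 2) - x / 2 by ring,
    show (3 * h - x) / 2 = 3 * (h / 2) - x / 2 by ring,
    show (4 * h - x) / 2 = 2 * (2 * (h / 2)) - x / 2 by ring,
    show (x - h) / 2 = x / 2 - h / 2 by ring, show h = 2 * (h / 2) by ring]
  simp only [sin_sub, sin_two_mul, cos_two_mul, sin_three_mul, cos_three_mul]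
  grind

theorem three_fourths_sin_half_mul_div_eq (h : ℝ) :
    3 / 4 * sin (h / 2) * (2 * cos (h / 2) ^ 2 - sin (h / 2) ^ 2)
        / (sin (h / 2) * sin h * sin (3 * h / 2))
      = 3 * (1 + 3 * cos h) / (16 * sin (h / 2) ^ 2 * (2 * cos (h / 2) + cos (3 * h / 2))) := by
  have hsin : sin h = 2 * sin (h / 2) * cos (h / 2) := by
    rw [← sin_two_mul, mul_div_cancel₀ h two_ne_zero]
  have hcos : cos h = 2 * cos (h / 2) ^ 2 - 1 := by
    rw [← cos_two_mul, mul_div_cancel₀ h two_ne_zero]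
  have hsin3 : sin (3 * h / 2) = sin (h / 2) * (4 * cos (h / 2) ^ 2 - 1) := by
    rw [mul_div_assoc, sin_three_mul]
    linear_combination -4 * sin (h / 2) * sin_sq_add_cos_sq (h / 2)
  have hcos3 : cos (3 * h / 2) = 4 * cos (h / 2) ^ 3 - 3 * cos (h / 2) := by
    rw [mul_div_assoc, cos_three_mul]
  rcases eq_or_ne (sin (h / 2)) 0 with hs | hs
  · -- both sides are `0`, the right-hand one through `x / 0 = 0`
    simp [hs]
  calc _ = sin (h / 2) / 8 * (3 * (1 + 3 * cos h))
        / (sin (h / 2) / 8 * (16 * sin (h / 2) ^ 2 * (2 * cos (h / 2) + cos (3 * h / 2)))) := by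
        congr 1
        · linear_combination
            -(3 / 4 * sin (h / 2)) * sin_sq_add_cos_sq (h / 2) - 9 / 8 * sin (h / 2) * hcos
        · rw [hsin, hsin3, hcos3]
          ring
    _ = _ := mul_div_mul_left _ _ (div_ne_zero hs (by norm_num))

theorem stmt_6_general (h : ℝ)
    (ω : ℝ) (hω : ω = Real.sin (h / 2) * Real.sin h * Real.sin (3 * h / 2))
    (P1 : ℝ → ℝ) (hP1 : P1 = fun x => Real.sin (x / 2) ^ 3 / ω)
    (P2 : ℝ → ℝ) (hP2 : P2 = fun x => (Real.sin (x / 2) * (Real.sin (x / 2) * Real.sin ((2 * h - x) / 2) + Real.sin ((3 * h - x) / 2) * Real.sin ((x - h) / 2)) + Real.sin ((4 * h - x) / 2) * Real.sin ((x - h) / 2) ^ 2) / ω)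
    : deriv (deriv P1) h = 3 * (1 + 3 * Real.cos h) / (16 * Real.sin (h / 2) ^ 2 * (2 * Real.cos (h / 2) + Real.cos (3 * h / 2))) ∧ deriv (deriv P2) h = 3 * (1 + 3 * Real.cos h) / (16 * Real.sin (h / 2) ^ 2 * (2 * Real.cos (h / 2) + Real.cos (3 * h / 2))) := by
  have hP1' : P1 = fun x => (sin (x / 2) ^ 3 + 0 * sin ((x - h) / 2) ^ 3) / ω := by
    simp [hP1]
  have hP2' : P2 = fun x =>
      (sin (x / 2) ^ 3 + -4 * cos h * cos (h / 2) * sin ((x - h) / 2) ^ 3) / ω := by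
    rw [hP2]
    funext x
    rw [trig_bspline_second_piece_eq]
    ring
  have hsecond := deriv_deriv_sin_half_sub_pow_three_add_mul_div 0 h
  simp only [sub_zero] at hsecond
  rw [hP1', hP2', hsecond, hsecond, hω, three_fourths_sin_half_mul_div_eq]
  exact ⟨rfl, rfl⟩

theorem stmt_6 (h : ℝ) (h0 : 0 < h) (h1 : h < 2 * Real.pi / 3)
    (ω : ℝ) (hω : ω = Real.sin (h / 2) * Real.sin h * Real.sin (3 * h / 2))
    (P1 : ℝ → ℝ) (hP1 : P1 = fun x => Real.sin (x / 2) ^ 3 / ω)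
    (P2 : ℝ → ℝ) (hP2 : P2 = fun x => (Real.sin (x / 2) * (Real.sin (x / 2) * Real.sin ((2 * h - x) / 2) + Real.sin ((3 * h - x) / 2) * Real.sin ((x - h) / 2)) + Real.sin ((4 * h - x) / 2) * Real.sin ((x - h) / 2) ^ 2) / ω)
    : deriv (deriv P1) h = 3 * (1 + 3 * Real.cos h) / (16 * Real.sin (h / 2) ^ 2 * (2 * Real.cos (h / 2) + Real.cos (3 * h / 2))) ∧ deriv (deriv P2) h = 3 * (1 + 3 * Real.cos h) / (16 * Real.sin (h / 2) ^ 2 * (2 * Real.cos (h / 2) + Real.cos (3 * h / 2))) :=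
  stmt_6_general h ω hω P1 hP1 P2 hP2
end

section
/- The second derivatives of the third and fourth pieces of the cubic trigonometric B-spline agree at the knot 3h, where their common value equals a5: (deriv (deriv P3))(3h) = (deriv (deriv P4))(3h) = 3(1 + 3cos(h))/(16·sin²(h/2)·(2cos(h/2) + cos(3h/2))). -/
/-!
Up to the factor `1 / ω`, both pieces are sums of products `sin ((x - a) / 2) sin ((x - b) / 2)
sin ((x - c) / 2)` of three half-angle sines, whose second derivative is
`(2 (c_a c_b s_c + c_a s_b c_c + s_a c_b c_c) - 3 s_a s_b s_c) / 4`. At the knot `x = 3h` every factor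
`sin ((x - 3h) / 2)` vanishes, and both second derivatives reduce to
`sin (h / 2) · 3 (1 + 3 cos h) / 8 / ω`. The identity
`sin θ (2 cos θ + cos 3θ) = sin 3θ cos θ` then turns `ω = sin (h/2) sin h sin (3h/2)` into the stated
denominator.
-/

open Real

section SinHalfProd

variable (a b c : ℝ)

noncomputable def sinHalfProd (x : ℝ) : ℝ :=
  sin ((x - a) / 2) * sin ((x - b) / 2) * sin ((x - c) / 2)

noncomputable def sinHalfProdDeriv (x : ℝ) : ℝ :=
  (cos ((x - a) / 2) * sin ((x - b) / 2) * sin ((x - c) / 2)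
    + sin ((x - a) / 2) * cos ((x - b) / 2) * sin ((x - c) / 2)
    + sin ((x - a) / 2) * sin ((x - b) / 2) * cos ((x - c) / 2)) / 2

noncomputable def sinHalfProdDeriv2 (x : ℝ) : ℝ :=
  (2 * (cos ((x - a) / 2) * cos ((x - b) / 2) * sin ((x - c) / 2)
    + cos ((x - a) / 2) * sin ((x - b) / 2) * cos ((x - c) / 2)
    + sin ((x - a) / 2) * cos ((x - b) / 2) * cos ((x - c) / 2))
    - 3 * sin ((x - a) / 2) * sin ((x - b) / 2) * sin ((x - c) / 2)) / 4

lemma hasDerivAt_sub_div_two (x : ℝ) : HasDerivAt (fun x => (x - a) / 2) (1 / 2) x :=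
  ((hasDerivAt_id x).sub_const a).div_const 2

lemma hasDerivAt_sinHalfProd (x : ℝ) :
    HasDerivAt (sinHalfProd a b c) (sinHalfProdDeriv a b c x) x := by
  have ha := hasDerivAt_sub_div_two a x
  have hb := hasDerivAt_sub_div_two b x
  have hc := hasDerivAt_sub_div_two c x
  refine ((ha.sin.mul hb.sin).mul hc.sin).congr_deriv ?_
  simp only [sinHalfProdDeriv, Pi.mul_apply]
  ring

lemma hasDerivAt_sinHalfProdDeriv (x : ℝ) :
    HasDerivAt (sinHalfProdDeriv a b c) (sinHalfProdDeriv2 a b c x) x := by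
  have ha := hasDerivAt_sub_div_two a x
  have hb := hasDerivAt_sub_div_two b x
  have hc := hasDerivAt_sub_div_two c x
  refine ((((ha.cos.mul hb.sin).mul hc.sin).add ((ha.sin.mul hb.cos).mul hc.sin)).add
    ((ha.sin.mul hb.sin).mul hc.cos)).div_const 2 |>.congr_deriv ?_
  simp only [sinHalfProdDeriv2, Pi.mul_apply]
  ring

end SinHalfProd

lemma deriv_deriv_of_hasDerivAt {f f' f'' : ℝ → ℝ} (hf : ∀ x, HasDerivAt f (f' x) x)
    (hf' : ∀ x, HasDerivAt f' (f'' x) x) (x : ℝ) : deriv (deriv f) x = f'' x := by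
  rw [deriv_eq hf, (hf' x).deriv]

lemma sin_mul_two_cos_add_cos_three_mul (θ : ℝ) :
    sin θ * (2 * cos θ + cos (3 * θ)) = sin (3 * θ) * cos θ := by
  have h := sin_sub (3 * θ) θ
  rw [show 3 * θ - θ = 2 * θ by ring, sin_two_mul] at h
  linarith

lemma piece3_eq_sum_sinHalfProd (h x : ℝ) :
    sin ((4 * h - x) / 2) * (sin ((x - h) / 2) * sin ((3 * h - x) / 2)
      + sin ((4 * h - x) / 2) * sin ((x - 2 * h) / 2)) + sin (x / 2) * sin ((3 * h - x) / 2) ^ 2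
    = sinHalfProd (4 * h) h (3 * h) x + sinHalfProd (4 * h) (4 * h) (2 * h) x
      + sinHalfProd 0 (3 * h) (3 * h) x := by
  simp only [sinHalfProd, sub_zero]
  rw [show (4 * h - x) / 2 = -((x - 4 * h) / 2) by ring,
    show (3 * h - x) / 2 = -((x - 3 * h) / 2) by ring, sin_neg, sin_neg]
  ring

lemma piece4_eq_neg_sinHalfProd (h x : ℝ) :
    sin ((4 * h - x) / 2) ^ 3 = -sinHalfProd (4 * h) (4 * h) (4 * h) x := by
  simp only [sinHalfProd]
  rw [show (4 * h - x) / 2 = -((x - 4 * h) / 2) by ring, sin_neg]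
  ring

lemma sinHalfProdDeriv2_piece3_at_knot (h : ℝ) :
    sinHalfProdDeriv2 (4 * h) h (3 * h) (3 * h) + sinHalfProdDeriv2 (4 * h) (4 * h) (2 * h) (3 * h)
      + sinHalfProdDeriv2 0 (3 * h) (3 * h) (3 * h)
    = sin (h / 2) * (3 * (1 + 3 * cos h) / 8) := by
  obtain ⟨θ, rfl⟩ : ∃ θ, h = 2 * θ := ⟨h / 2, by ring⟩
  simp only [sinHalfProdDeriv2]
  rw [show (3 * (2 * θ) - 4 * (2 * θ)) / 2 = -θ by ring,
    show (3 * (2 * θ) - 2 * θ) / 2 = 2 * θ by ring, show (3 * (2 * θ) - 3 * (2 * θ)) / 2 = 0 by ring,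
    show (3 * (2 * θ) - 2 * (2 * θ)) / 2 = θ by ring, show (3 * (2 * θ) - 0) / 2 = 3 * θ by ring,
    show 2 * θ / 2 = θ by ring]
  simp only [sin_neg, cos_neg, sin_zero, cos_zero, sin_two_mul, cos_two_mul, sin_three_mul]
  linear_combination (-(11 / 4) * sin θ) * sin_sq_add_cos_sq θ

lemma sinHalfProdDeriv2_piece4_at_knot (h : ℝ) :
    -sinHalfProdDeriv2 (4 * h) (4 * h) (4 * h) (3 * h) = sin (h / 2) * (3 * (1 + 3 * cos h) / 8) := by
  obtain ⟨θ, rfl⟩ : ∃ θ, h = 2 * θ := ⟨h / 2, by ring⟩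
  simp only [sinHalfProdDeriv2]
  rw [show (3 * (2 * θ) - 4 * (2 * θ)) / 2 = -θ by ring, show 2 * θ / 2 = θ by ring]
  simp only [sin_neg, cos_neg, cos_two_mul]
  linear_combination (-(3 / 4) * sin θ) * sin_sq_add_cos_sq θ

lemma sin_half_mul_div_sin_half_mul_eq (h : ℝ) :
    sin (h / 2) * (3 * (1 + 3 * cos h) / 8) / (sin (h / 2) * sin h * sin (3 * h / 2))
    = 3 * (1 + 3 * cos h) / (16 * sin (h / 2) ^ 2 * (2 * cos (h / 2) + cos (3 * h / 2))) := by
  obtain ⟨θ, rfl⟩ : ∃ θ, h = 2 * θ := ⟨h / 2, by ring⟩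
  rw [show 2 * θ / 2 = θ by ring, show 3 * (2 * θ) / 2 = 3 * θ by ring]
  have hden : 16 * sin θ ^ 2 * (2 * cos θ + cos (3 * θ)) = 8 * (sin (2 * θ) * sin (3 * θ)) := by
    rw [sin_two_mul]
    linear_combination (16 * sin θ) * sin_mul_two_cos_add_cos_three_mul θ
  by_cases hθ : sin θ = 0
  · simp [hθ]
  · rw [hden, mul_assoc, mul_div_mul_left _ _ hθ, div_div]

lemma deriv_deriv_piece3_at_knot (h ω : ℝ) :
    deriv (deriv fun x => (sinHalfProd (4 * h) h (3 * h) x + sinHalfProd (4 * h) (4 * h) (2 * h) x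
      + sinHalfProd 0 (3 * h) (3 * h) x) / ω) (3 * h)
    = sin (h / 2) * (3 * (1 + 3 * cos h) / 8) / ω := by
  rw [← sinHalfProdDeriv2_piece3_at_knot]
  exact deriv_deriv_of_hasDerivAt
    (fun x => (((hasDerivAt_sinHalfProd _ _ _ x).add (hasDerivAt_sinHalfProd _ _ _ x)).add
      (hasDerivAt_sinHalfProd _ _ _ x)).div_const ω)
    (fun x => (((hasDerivAt_sinHalfProdDeriv _ _ _ x).add (hasDerivAt_sinHalfProdDeriv _ _ _ x)).add
      (hasDerivAt_sinHalfProdDeriv _ _ _ x)).div_const ω) _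

lemma deriv_deriv_piece4_at_knot (h ω : ℝ) :
    deriv (deriv fun x => -sinHalfProd (4 * h) (4 * h) (4 * h) x / ω) (3 * h)
    = sin (h / 2) * (3 * (1 + 3 * cos h) / 8) / ω := by
  rw [← sinHalfProdDeriv2_piece4_at_knot]
  exact deriv_deriv_of_hasDerivAt (fun x => (hasDerivAt_sinHalfProd _ _ _ x).neg.div_const ω)
    (fun x => (hasDerivAt_sinHalfProdDeriv _ _ _ x).neg.div_const ω) _

theorem stmt_8_general (h : ℝ)
    (ω : ℝ) (hω : ω = Real.sin (h / 2) * Real.sin h * Real.sin (3 * h / 2))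
    (P3 : ℝ → ℝ) (hP3 : P3 = fun x => (Real.sin ((4 * h - x) / 2) * (Real.sin ((x - h) / 2) * Real.sin ((3 * h - x) / 2) + Real.sin ((4 * h - x) / 2) * Real.sin ((x - 2 * h) / 2)) + Real.sin (x / 2) * Real.sin ((3 * h - x) / 2) ^ 2) / ω)
    (P4 : ℝ → ℝ) (hP4 : P4 = fun x => Real.sin ((4 * h - x) / 2) ^ 3 / ω)
    : deriv (deriv P3) (3 * h) = 3 * (1 + 3 * Real.cos h) / (16 * Real.sin (h / 2) ^ 2 * (2 * Real.cos (h / 2) + Real.cos (3 * h / 2))) ∧ deriv (deriv P4) (3 * h) = 3 * (1 + 3 * Real.cos h) / (16 * Real.sin (h / 2) ^ 2 * (2 * Real.cos (h / 2) + Real.cos (3 * h / 2))) := by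
  have hvalue := sin_half_mul_div_sin_half_mul_eq h
  rw [← hω] at hvalue
  have hP3' : P3 = fun x => (sinHalfProd (4 * h) h (3 * h) x + sinHalfProd (4 * h) (4 * h) (2 * h) x
      + sinHalfProd 0 (3 * h) (3 * h) x) / ω := by
    rw [hP3]
    simp only [piece3_eq_sum_sinHalfProd]
  have hP4' : P4 = fun x => -sinHalfProd (4 * h) (4 * h) (4 * h) x / ω := by
    rw [hP4]
    simp only [piece4_eq_neg_sinHalfProd]
  constructor
  · rw [hP3', deriv_deriv_piece3_at_knot, hvalue]
  · rw [hP4', deriv_deriv_piece4_at_knot, hvalue]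

theorem stmt_8 (h : ℝ) (h0 : 0 < h) (h1 : h < 2 * Real.pi / 3)
    (ω : ℝ) (hω : ω = Real.sin (h / 2) * Real.sin h * Real.sin (3 * h / 2))
    (P3 : ℝ → ℝ) (hP3 : P3 = fun x => (Real.sin ((4 * h - x) / 2) * (Real.sin ((x - h) / 2) * Real.sin ((3 * h - x) / 2) + Real.sin ((4 * h - x) / 2) * Real.sin ((x - 2 * h) / 2)) + Real.sin (x / 2) * Real.sin ((3 * h - x) / 2) ^ 2) / ω)
    (P4 : ℝ → ℝ) (hP4 : P4 = fun x => Real.sin ((4 * h - x) / 2) ^ 3 / ω)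
    : deriv (deriv P3) (3 * h) = 3 * (1 + 3 * Real.cos h) / (16 * Real.sin (h / 2) ^ 2 * (2 * Real.cos (h / 2) + Real.cos (3 * h / 2))) ∧ deriv (deriv P4) (3 * h) = 3 * (1 + 3 * Real.cos h) / (16 * Real.sin (h / 2) ^ 2 * (2 * Real.cos (h / 2) + Real.cos (3 * h / 2))) :=
  stmt_8_general h ω hω P3 hP3 P4 hP4
end

section
/- Let A, B, C be real numbers with A + B + C > 0, A − C ≥ 0 and A − B + C ≥ 0. Then every complex number δ satisfying A·δ² − B·δ + C = 0 satisfies |δ| ≤ 1. -/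
/-!
Put `u = δ - 1`, `v = δ + 1`. Four times `Aδ² - Bδ + C` equals the binary form
`(A + B + C) u² + 2 (A - C) u v + (A - B + C) v²`, whose coefficients are `a > 0`, `b, c ≥ 0`
(this is the Möbius substitution `δ = (1 + ξ)/(1 - ξ)` with `ξ = u / v`, cleared of denominators).
Multiplying `a u² + b u v + c v² = 0` by `conj u * conj v` and taking real parts gives
`Re (u v̄) (a |u|² + c |v|²) = -b |u|² |v|² ≤ 0`, so `Re (u v̄) = |δ|² - 1 ≤ 0`.
-/

open ComplexConjugate

namespace Complex

theorem re_mul_conj_nonpos_of_quadratic_form_eq_zero {a b c : ℝ} (ha : 0 < a) (hb : 0 ≤ b)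
    (hc : 0 ≤ c) {u v : ℂ} (h : a * u ^ 2 + b * u * v + c * v ^ 2 = 0) :
    (u * conj v).re ≤ 0 := by
  have key : (u * conj v).re * (a * normSq u + c * normSq v) = -(b * normSq u * normSq v) := by
    have hre := congrArg re h
    have him := congrArg im h
    simp only [add_re, add_im, mul_re, mul_im, ofReal_re, ofReal_im, pow_two, zero_re, zero_im,
      conj_re, conj_im, normSq_apply] at hre him ⊢
    linear_combination (u.re * v.re - u.im * v.im) * hre + (u.re * v.im + u.im * v.re) * him
  rcases eq_or_ne u 0 with rfl | hu
  · simp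
  · refine nonpos_of_mul_nonpos_left (key.trans_le ?_) ?_
    · rw [neg_nonpos]
      exact mul_nonneg (mul_nonneg hb (normSq_nonneg u)) (normSq_nonneg v)
    · exact add_pos_of_pos_of_nonneg (mul_pos ha (normSq_pos.2 hu))
        (mul_nonneg hc (normSq_nonneg v))

theorem re_sub_one_mul_conj_add_one (z : ℂ) : ((z - 1) * conj (z + 1)).re = ‖z‖ ^ 2 - 1 := by
  rw [Complex.sq_norm, normSq_apply]
  simp only [mul_re, sub_re, sub_im, conj_re, conj_im, add_re, add_im, one_re, one_im]
  ring

end Complex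

theorem stmt_12 (A B C : ℝ) (h1 : 0 < A + B + C) (h2 : 0 ≤ A - C) (h3 : 0 ≤ A - B + C)
    (δ : ℂ) (hroot : (A : ℂ) * δ ^ 2 - (B : ℂ) * δ + (C : ℂ) = 0) :
    ‖δ‖ ≤ 1 := by
  have hform : ((A + B + C : ℝ) : ℂ) * (δ - 1) ^ 2 + ((2 * (A - C) : ℝ) : ℂ) * (δ - 1) * (δ + 1)
      + ((A - B + C : ℝ) : ℂ) * (δ + 1) ^ 2 = 0 := by
    push_cast
    linear_combination 4 * hroot
  have hre := Complex.re_mul_conj_nonpos_of_quadratic_form_eq_zero h1 (by linarith) h3 hform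
  rw [Complex.re_sub_one_mul_conj_add_one] at hre
  exact (pow_le_one_iff_of_nonneg (norm_nonneg δ) two_ne_zero).1 (by linarith)
end

section
/- The following two trigonometric identities hold: a2 − 2a1 = 1/(cos(h/2)·(2cos(h/2) + 1)) and a6 − 2a5 = −(3/4)·cot²(h/4)/(cos(h/2)·(2cos(h/2) + 1)). -/
/-! With `s = sin (h/2)` and `c = cos (h/2)`, the multiple-angle formulas turn every coefficient
into a rational function of `s` and `c` whose denominators factor through `2c - 1` and `2c + 1`
(`1 + 2 cos h = (2c - 1)(2c + 1)`), and `cot (h/4) = (1 + c) / s`. Both identities are then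
identities of rational functions; the second rests on `2c³ + 3c² - 1 = (c + 1)² (2c - 1)`.
For `0 < h < 2π/3` we have `s > 0` and `c > 1/2`, so no denominator vanishes. -/

open Real

namespace Real

theorem one_add_two_mul_cos_two_mul (x : ℝ) :
    1 + 2 * cos (2 * x) = (2 * cos x - 1) * (2 * cos x + 1) := by
  rw [cos_two_mul]; ring

theorem sin_three_mul_eq_sin_mul_s14 (x : ℝ) :
    sin (3 * x) = sin x * ((2 * cos x - 1) * (2 * cos x + 1)) := by
  rw [sin_three_mul]; linear_combination (-4 * sin x) * sin_sq_add_cos_sq x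

theorem two_mul_cos_add_cos_three_mul (x : ℝ) :
    2 * cos x + cos (3 * x) = cos x * ((2 * cos x - 1) * (2 * cos x + 1)) := by
  rw [cos_three_mul]; ring

-- No side conditions: where `sin x = 0`, both sides are `0` by the convention `a / 0 = 0`.
theorem cot_half_eq (x : ℝ) : cot (x / 2) = (1 + cos x) / sin x := by
  conv_rhs => rw [← mul_div_cancel₀ x (two_ne_zero' ℝ), sin_two_mul, cos_two_mul]
  rw [cot_eq_cos_div_sin]
  rcases eq_or_ne (cos (x / 2)) 0 with hc | hc
  · simp [hc]
  · rw [show 1 + (2 * cos (x / 2) ^ 2 - 1) = 2 * cos (x / 2) * cos (x / 2) by ring,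
      mul_div_mul_right _ _ hc, mul_div_mul_left _ _ two_ne_zero]

end Real

namespace Coeff

noncomputable def a1 (h : ℝ) : ℝ := sin (h / 2) ^ 2 / (sin h * sin (3 * h / 2))

noncomputable def a2 (h : ℝ) : ℝ := 2 / (1 + 2 * cos h)

noncomputable def a5 (h : ℝ) : ℝ :=
  3 * (1 + 3 * cos h) / (16 * sin (h / 2) ^ 2 * (2 * cos (h / 2) + cos (3 * h / 2)))

noncomputable def a6 (h : ℝ) : ℝ :=
  -(3 * cos (h / 2) ^ 2) / (2 * sin (h / 2) ^ 2 * (1 + 2 * cos h))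

section

variable {h : ℝ} (hs : sin (h / 2) ≠ 0) (hc : cos (h / 2) ≠ 0)
  (hm : 2 * cos (h / 2) - 1 ≠ 0) (hp : 2 * cos (h / 2) + 1 ≠ 0)
include hs hc hm hp

theorem a2_sub_two_mul_a1 :
    a2 h - 2 * a1 h = 1 / (cos (h / 2) * (2 * cos (h / 2) + 1)) := by
  obtain ⟨x, rfl⟩ : ∃ x, h = 2 * x := ⟨h / 2, by ring⟩
  have hx : 2 * x / 2 = x := by ring
  rw [hx] at hs hc hm hp
  rw [a1, a2, hx, show 3 * (2 * x) / 2 = 3 * x by ring,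
    sin_three_mul_eq_sin_mul_s14, sin_two_mul, one_add_two_mul_cos_two_mul]
  field_simp

theorem a6_sub_two_mul_a5 :
    a6 h - 2 * a5 h = -(3 / 4) * cot (h / 4) ^ 2 / (cos (h / 2) * (2 * cos (h / 2) + 1)) := by
  obtain ⟨x, rfl⟩ : ∃ x, h = 2 * x := ⟨h / 2, by ring⟩
  have hx : 2 * x / 2 = x := by ring
  rw [hx] at hs hc hm hp
  rw [a5, a6, hx, show 3 * (2 * x) / 2 = 3 * x by ring,
    show 2 * x / 4 = x / 2 by ring, two_mul_cos_add_cos_three_mul, cot_half_eq,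
    one_add_two_mul_cos_two_mul, cos_two_mul]
  field_simp
  rw [mul_comm (cos x) 2]
  rw [neg_div', div_eq_div_iff (mul_ne_zero hm hp) hp]
  ring

end

end Coeff

theorem stmt_14_general (h : ℝ) (hh0 : 0 < h) (hh1 : h < 2 * Real.pi / 3)
    (a1 a2 a5 a6 : ℝ)
    (ha1 : a1 = Real.sin (h / 2) ^ 2 / (Real.sin h * Real.sin (3 * h / 2)))
    (ha2 : a2 = 2 / (1 + 2 * Real.cos h))
    (ha5 : a5 = 3 * (1 + 3 * Real.cos h) /
      (16 * Real.sin (h / 2) ^ 2 * (2 * Real.cos (h / 2) + Real.cos (3 * h / 2))))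
    (ha6 : a6 = -(3 * Real.cos (h / 2) ^ 2) / (2 * Real.sin (h / 2) ^ 2 * (1 + 2 * Real.cos h)))
    : a2 - 2 * a1 = 1 / (Real.cos (h / 2) * (2 * Real.cos (h / 2) + 1)) ∧
      a6 - 2 * a5 = -(3 / 4) * Real.cot (h / 4) ^ 2 / (Real.cos (h / 2) * (2 * Real.cos (h / 2) + 1)) := by
  have hs : 0 < sin (h / 2) := sin_pos_of_pos_of_lt_pi (by linarith) (by linarith [pi_pos])
  have hc : 1 / 2 < cos (h / 2) := by
    rw [← cos_pi_div_three]
    exact cos_lt_cos_of_nonneg_of_le_pi (by linarith) (by linarith [pi_pos]) (by linarith)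
  have hs0 : sin (h / 2) ≠ 0 := hs.ne'
  have hc0 : cos (h / 2) ≠ 0 := by linarith
  have hm : 2 * cos (h / 2) - 1 ≠ 0 := by linarith
  have hp : 2 * cos (h / 2) + 1 ≠ 0 := by linarith
  subst ha1 ha2 ha5 ha6
  exact ⟨Coeff.a2_sub_two_mul_a1 hs0 hc0 hm hp, Coeff.a6_sub_two_mul_a5 hs0 hc0 hm hp⟩

theorem stmt_14 (h k α β θ : ℝ) (hh0 : 0 < h) (hh1 : h < 2 * Real.pi / 3)
    (a1 a2 a5 a6 w1 w2 w3 w4 : ℝ)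
    (ha1 : a1 = Real.sin (h / 2) ^ 2 / (Real.sin h * Real.sin (3 * h / 2)))
    (ha2 : a2 = 2 / (1 + 2 * Real.cos h))
    (ha5 : a5 = 3 * (1 + 3 * Real.cos h) /
      (16 * Real.sin (h / 2) ^ 2 * (2 * Real.cos (h / 2) + Real.cos (3 * h / 2))))
    (ha6 : a6 = -(3 * Real.cos (h / 2) ^ 2) / (2 * Real.sin (h / 2) ^ 2 * (1 + 2 * Real.cos h)))
    (hw1 : w1 = (1 + 2 * α * k + k ^ 2 * θ * β ^ 2) * a1 - k ^ 2 * θ * a5)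
    (hw2 : w2 = (1 + 2 * α * k + k ^ 2 * θ * β ^ 2) * a2 - k ^ 2 * θ * a6)
    (hw3 : w3 = (2 + 2 * α * k - (1 - θ) * k ^ 2 * β ^ 2) * a1 + (1 - θ) * k ^ 2 * a5)
    (hw4 : w4 = (2 + 2 * α * k - (1 - θ) * k ^ 2 * β ^ 2) * a2 + (1 - θ) * k ^ 2 * a6)
    : a2 - 2 * a1 = 1 / (Real.cos (h / 2) * (2 * Real.cos (h / 2) + 1)) ∧
      a6 - 2 * a5 = -(3 / 4) * Real.cot (h / 4) ^ 2 / (Real.cos (h / 2) * (2 * Real.cos (h / 2) + 1)) :=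
  stmt_14_general h hh0 hh1 a1 a2 a5 a6 ha1 ha2 ha5 ha6
end

section
/- At the extreme dimensionless wave number φ = π, the quantity A + B + C appearing in the von Neumann stability analysis has the closed form (w2 − 2w1) + (w4 − 2w3) + (a2 − 2a1) = (16(1 + αk)·sin²(h/4) + k²(2θ − 1)·(3cos²(h/4) + 4β²·sin²(h/4)))/(4·sin²(h/4)·cos(h/2)·(2cos(h/2) + 1)). -/
open Real

/-!
Everything is a rational function of `c = cos (h / 2)`: with `s = sin (h / 2)` one has
`sin h = 2sc`, `sin (3h/2) = s(4c² - 1)`, `cos (3h/2) = c(4c² - 3)` and `s² = 1 - c²`.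
The sum `A + B + C` is linear in the two stencil differences `a₂ - 2a₁ = 1 / (c(2c + 1))` and
`a₆ - 2a₅ = -3(1 + c) / (4(1 - c)c(2c + 1))`; rewriting `1 ± c` as `2cos²(h/4)`, `2sin²(h/4)`
gives the closed form. On `0 < h < 2π/3` we have `1/2 < c < 1`, so no denominator vanishes.
-/

namespace VonNeumannStencil

noncomputable def a₁ (h : ℝ) : ℝ := sin (h / 2) ^ 2 / (sin h * sin (3 * h / 2))

noncomputable def a₂ (h : ℝ) : ℝ := 2 / (1 + 2 * cos h)

noncomputable def a₅ (h : ℝ) : ℝ :=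
  3 * (1 + 3 * cos h) / (16 * sin (h / 2) ^ 2 * (2 * cos (h / 2) + cos (3 * h / 2)))

noncomputable def a₆ (h : ℝ) : ℝ :=
  -(3 * cos (h / 2) ^ 2) / (2 * sin (h / 2) ^ 2 * (1 + 2 * cos h))

lemma cos_half_mem_Ioo {h : ℝ} (hh : h ∈ Set.Ioo 0 (2 * π / 3)) :
    cos (h / 2) ∈ Set.Ioo (1 / 2) 1 := by
  obtain ⟨hh0, hh1⟩ := hh
  constructor
  · rw [← cos_pi_div_three]
    exact cos_lt_cos_of_nonneg_of_le_pi (by linarith) (by linarith [pi_pos]) (by linarith)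
  · rw [← cos_zero]
    exact cos_lt_cos_of_nonneg_of_le_pi le_rfl (by linarith [pi_gt_three]) (by linarith)

lemma cos_eq_two_mul_cos_half_sq_sub_one (h : ℝ) : cos h = 2 * cos (h / 2) ^ 2 - 1 := by
  rw [← cos_two_mul, mul_div_cancel₀ h two_ne_zero]

lemma sin_eq_two_mul_sin_half_mul_cos_half (h : ℝ) : sin h = 2 * sin (h / 2) * cos (h / 2) := by
  rw [← sin_two_mul, mul_div_cancel₀ h two_ne_zero]

lemma sin_three_halves (h : ℝ) : sin (3 * h / 2) = sin (h / 2) * (4 * cos (h / 2) ^ 2 - 1) := by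
  rw [mul_div_assoc, sin_three_mul]
  linear_combination (-4 * sin (h / 2)) * sin_sq (h / 2)

lemma cos_three_halves (h : ℝ) : cos (3 * h / 2) = 4 * cos (h / 2) ^ 3 - 3 * cos (h / 2) := by
  rw [mul_div_assoc, cos_three_mul]

lemma cos_quarter_sq (h : ℝ) : cos (h / 4) ^ 2 = (1 + cos (h / 2)) / 2 := by
  rw [cos_sq, show 2 * (h / 4) = h / 2 by ring]
  ring

lemma sin_quarter_sq (h : ℝ) : sin (h / 4) ^ 2 = (1 - cos (h / 2)) / 2 := by
  rw [sin_sq, cos_quarter_sq]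
  ring

lemma a₁_eq {h : ℝ} (hh : h ∈ Set.Ioo 0 (2 * π / 3)) :
    a₁ h = 1 / (2 * cos (h / 2) * (4 * cos (h / 2) ^ 2 - 1)) := by
  have hs : sin (h / 2) ≠ 0 :=
    (sin_pos_of_pos_of_lt_pi (by linarith [hh.1]) (by linarith [hh.2, pi_pos])).ne'
  rw [a₁, sin_eq_two_mul_sin_half_mul_cos_half h, sin_three_halves]
  field_simp

lemma a₂_eq (h : ℝ) : a₂ h = 2 / (4 * cos (h / 2) ^ 2 - 1) := by
  rw [a₂, cos_eq_two_mul_cos_half_sq_sub_one h]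
  ring_nf

lemma a₅_eq (h : ℝ) :
    a₅ h = 3 * (6 * cos (h / 2) ^ 2 - 2) /
      (16 * (1 - cos (h / 2) ^ 2) * (cos (h / 2) * (4 * cos (h / 2) ^ 2 - 1))) := by
  rw [a₅, cos_eq_two_mul_cos_half_sq_sub_one h, cos_three_halves, sin_sq]
  ring_nf

lemma a₆_eq (h : ℝ) :
    a₆ h = -(3 * cos (h / 2) ^ 2) / (2 * (1 - cos (h / 2) ^ 2) * (4 * cos (h / 2) ^ 2 - 1)) := by
  rw [a₆, cos_eq_two_mul_cos_half_sq_sub_one h, sin_sq]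
  ring_nf

lemma a₂_sub_two_mul_a₁ {h : ℝ} (hh : h ∈ Set.Ioo 0 (2 * π / 3)) :
    a₂ h - 2 * a₁ h = 1 / (cos (h / 2) * (2 * cos (h / 2) + 1)) := by
  obtain ⟨hc₁, hc₂⟩ := cos_half_mem_Ioo hh
  have : 2 * cos (h / 2) - 1 ≠ 0 := by linarith
  have : 2 * cos (h / 2) + 1 ≠ 0 := by linarith
  have : cos (h / 2) ≠ 0 := by linarith
  rw [a₁_eq hh, a₂_eq, show 4 * cos (h / 2) ^ 2 - 1 = (2 * cos (h / 2) - 1) * (2 * cos (h / 2) + 1)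
    by ring]
  field_simp

lemma a₆_sub_two_mul_a₅ {h : ℝ} (hh : h ∈ Set.Ioo 0 (2 * π / 3)) :
    a₆ h - 2 * a₅ h = -(3 * cos (h / 4) ^ 2) /
      (4 * sin (h / 4) ^ 2 * cos (h / 2) * (2 * cos (h / 2) + 1)) := by
  obtain ⟨hc₁, hc₂⟩ := cos_half_mem_Ioo hh
  have : 2 * cos (h / 2) - 1 ≠ 0 := by linarith
  have : 2 * cos (h / 2) + 1 ≠ 0 := by linarith
  have : cos (h / 2) ≠ 0 := by linarith
  have : 1 - cos (h / 2) ≠ 0 := by linarith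
  have : 1 + cos (h / 2) ≠ 0 := by linarith
  rw [a₅_eq, a₆_eq, cos_quarter_sq, sin_quarter_sq,
    show 1 - cos (h / 2) ^ 2 = (1 - cos (h / 2)) * (1 + cos (h / 2)) by ring,
    show 4 * cos (h / 2) ^ 2 - 1 = (2 * cos (h / 2) - 1) * (2 * cos (h / 2) + 1) by ring]
  field_simp
  ring

end VonNeumannStencil

open VonNeumannStencil in
theorem stmt_15 (h k α β θ : ℝ) (hh0 : 0 < h) (hh1 : h < 2 * Real.pi / 3)
    (a1 a2 a5 a6 w1 w2 w3 w4 : ℝ)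
    (ha1 : a1 = Real.sin (h / 2) ^ 2 / (Real.sin h * Real.sin (3 * h / 2)))
    (ha2 : a2 = 2 / (1 + 2 * Real.cos h))
    (ha5 : a5 = 3 * (1 + 3 * Real.cos h) /
      (16 * Real.sin (h / 2) ^ 2 * (2 * Real.cos (h / 2) + Real.cos (3 * h / 2))))
    (ha6 : a6 = -(3 * Real.cos (h / 2) ^ 2) / (2 * Real.sin (h / 2) ^ 2 * (1 + 2 * Real.cos h)))
    (hw1 : w1 = (1 + 2 * α * k + k ^ 2 * θ * β ^ 2) * a1 - k ^ 2 * θ * a5)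
    (hw2 : w2 = (1 + 2 * α * k + k ^ 2 * θ * β ^ 2) * a2 - k ^ 2 * θ * a6)
    (hw3 : w3 = (2 + 2 * α * k - (1 - θ) * k ^ 2 * β ^ 2) * a1 + (1 - θ) * k ^ 2 * a5)
    (hw4 : w4 = (2 + 2 * α * k - (1 - θ) * k ^ 2 * β ^ 2) * a2 + (1 - θ) * k ^ 2 * a6)
    : (w2 - 2 * w1) + (w4 - 2 * w3) + (a2 - 2 * a1)
      = (16 * (1 + α * k) * Real.sin (h / 4) ^ 2
          + k ^ 2 * (2 * θ - 1) * (3 * Real.cos (h / 4) ^ 2 + 4 * β ^ 2 * Real.sin (h / 4) ^ 2))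
        / (4 * Real.sin (h / 4) ^ 2 * Real.cos (h / 2) * (2 * Real.cos (h / 2) + 1)) := by
  have hh : h ∈ Set.Ioo 0 (2 * π / 3) := ⟨hh0, hh1⟩
  have hsum : (w2 - 2 * w1) + (w4 - 2 * w3) + (a2 - 2 * a1) =
      (4 * (1 + α * k) + (2 * θ - 1) * k ^ 2 * β ^ 2) * (a2 - 2 * a1)
        - (2 * θ - 1) * k ^ 2 * (a6 - 2 * a5) := by
    subst hw1 hw2 hw3 hw4
    ring
  obtain ⟨hc₁, hc₂⟩ := cos_half_mem_Ioo hh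
  have : sin (h / 4) ≠ 0 := fun h0 ↦ by
    have := sin_quarter_sq h
    rw [h0] at this
    linarith
  have : cos (h / 2) ≠ 0 := by linarith
  have : 2 * cos (h / 2) + 1 ≠ 0 := by linarith
  rw [hsum, ha1, ha2, ha5, ha6, ← a₁, ← a₂, ← a₅, ← a₆, a₂_sub_two_mul_a₁ hh, a₆_sub_two_mul_a₅ hh]
  field_simp
  ring
end

section
/- Let h ∈ (0, 2π/3), k ≥ 0, α ≥ 0, β ∈ ℝ and θ ≥ 1/2. Then at φ = π the first Routh–Hurwitz stability inequality holds: A + B + C = (w2 − 2w1) + (w4 − 2w3) + (a2 − 2a1) ≥ 0. -/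
/-!
At `φ = π` the sum collapses to
`(4 + 4αk + (2θ - 1)k²β²)(a2 - 2a1) + (2θ - 1)k²(2a5 - a6)`,
so with `θ ≥ 1/2` it suffices that `a2 - 2a1 ≥ 0 ≥ a6 - 2a5`. Writing everything in terms of
`c = cos (h/2) ∈ (1/2, 1)` gives `a2 - 2a1 = (2c - 1) / (c (4c² - 1))` and
`a6 - 2a5 = -3 (c + 1)² (2c - 1) / (4 sin² (h/2) c (4c² - 1))`, and both signs follow from `2c > 1`.
-/

open Real

noncomputable def coeffA1 (h : ℝ) : ℝ := sin (h / 2) ^ 2 / (sin h * sin (3 * h / 2))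

noncomputable def coeffA2 (h : ℝ) : ℝ := 2 / (1 + 2 * cos h)

noncomputable def coeffA5 (h : ℝ) : ℝ :=
  3 * (1 + 3 * cos h) / (16 * sin (h / 2) ^ 2 * (2 * cos (h / 2) + cos (3 * h / 2)))

noncomputable def coeffA6 (h : ℝ) : ℝ :=
  -(3 * cos (h / 2) ^ 2) / (2 * sin (h / 2) ^ 2 * (1 + 2 * cos h))

section HalfAngle

variable (h : ℝ)

theorem cos_eq_two_mul_cos_half_sq_sub_one : cos h = 2 * cos (h / 2) ^ 2 - 1 := by
  rw [← cos_two_mul]; ring_nf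

theorem sin_eq_two_mul_sin_half_mul_cos_half : sin h = 2 * sin (h / 2) * cos (h / 2) := by
  rw [← sin_two_mul]; ring_nf

theorem sin_three_mul_half : sin (3 * h / 2) = sin (h / 2) * (4 * cos (h / 2) ^ 2 - 1) := by
  rw [show 3 * h / 2 = 3 * (h / 2) by ring, sin_three_mul]
  linear_combination (-4 * sin (h / 2)) * sin_sq_add_cos_sq (h / 2)

theorem cos_three_mul_half : cos (3 * h / 2) = 4 * cos (h / 2) ^ 3 - 3 * cos (h / 2) := by
  rw [show 3 * h / 2 = 3 * (h / 2) by ring, cos_three_mul]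

end HalfAngle

section Coefficients

variable {h : ℝ}

theorem coeffA2_sub_two_mul_coeffA1 (hs : sin (h / 2) ≠ 0) (hc : cos (h / 2) ≠ 0) :
    coeffA2 h - 2 * coeffA1 h =
      (2 * cos (h / 2) - 1) / (cos (h / 2) * (4 * cos (h / 2) ^ 2 - 1)) := by
  rw [coeffA1, coeffA2, cos_eq_two_mul_cos_half_sq_sub_one h,
    sin_eq_two_mul_sin_half_mul_cos_half h, sin_three_mul_half h]
  field_simp
  ring

theorem coeffA6_sub_two_mul_coeffA5 (hs : sin (h / 2) ≠ 0) (hc : cos (h / 2) ≠ 0) :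
    coeffA6 h - 2 * coeffA5 h =
      -(3 * (cos (h / 2) + 1) ^ 2 * (2 * cos (h / 2) - 1)) /
        (4 * sin (h / 2) ^ 2 * cos (h / 2) * (4 * cos (h / 2) ^ 2 - 1)) := by
  rw [coeffA5, coeffA6, cos_eq_two_mul_cos_half_sq_sub_one h, cos_three_mul_half h]
  field_simp
  ring

theorem one_half_lt_cos_half (hh0 : 0 < h) (hh1 : h < 2 * π / 3) : 1 / 2 < cos (h / 2) := by
  rw [← cos_pi_div_three]
  exact cos_lt_cos_of_nonneg_of_le_pi (by linarith) (by linarith [pi_pos]) (by linarith)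

theorem sin_half_pos (hh0 : 0 < h) (hh1 : h < 2 * π) : 0 < sin (h / 2) :=
  sin_pos_of_pos_of_lt_pi (by linarith) (by linarith)

theorem coeffA2_sub_two_mul_coeffA1_nonneg (hh0 : 0 < h) (hh1 : h < 2 * π / 3) :
    0 ≤ coeffA2 h - 2 * coeffA1 h := by
  have hc := one_half_lt_cos_half hh0 hh1
  have hs := sin_half_pos hh0 (by linarith [pi_pos])
  have h4c : 0 < 4 * cos (h / 2) ^ 2 - 1 := by nlinarith
  rw [coeffA2_sub_two_mul_coeffA1 hs.ne' (by linarith)]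
  have h2c : 0 ≤ 2 * cos (h / 2) - 1 := by linarith
  positivity

theorem coeffA6_sub_two_mul_coeffA5_nonpos (hh0 : 0 < h) (hh1 : h < 2 * π / 3) :
    coeffA6 h - 2 * coeffA5 h ≤ 0 := by
  have hc := one_half_lt_cos_half hh0 hh1
  have hs := sin_half_pos hh0 (by linarith [pi_pos])
  have h4c : 0 < 4 * cos (h / 2) ^ 2 - 1 := by nlinarith
  rw [coeffA6_sub_two_mul_coeffA5 hs.ne' (by linarith)]
  have h2c : 0 ≤ 2 * cos (h / 2) - 1 := by linarith
  exact div_nonpos_of_nonpos_of_nonneg (neg_nonpos.mpr (by positivity)) (by positivity)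

end Coefficients

theorem stmt_16 (h k α β θ : ℝ) (hh0 : 0 < h) (hh1 : h < 2 * Real.pi / 3)
    (a1 a2 a5 a6 w1 w2 w3 w4 : ℝ)
    (ha1 : a1 = Real.sin (h / 2) ^ 2 / (Real.sin h * Real.sin (3 * h / 2)))
    (ha2 : a2 = 2 / (1 + 2 * Real.cos h))
    (ha5 : a5 = 3 * (1 + 3 * Real.cos h) /
      (16 * Real.sin (h / 2) ^ 2 * (2 * Real.cos (h / 2) + Real.cos (3 * h / 2))))
    (ha6 : a6 = -(3 * Real.cos (h / 2) ^ 2) / (2 * Real.sin (h / 2) ^ 2 * (1 + 2 * Real.cos h)))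
    (hw1 : w1 = (1 + 2 * α * k + k ^ 2 * θ * β ^ 2) * a1 - k ^ 2 * θ * a5)
    (hw2 : w2 = (1 + 2 * α * k + k ^ 2 * θ * β ^ 2) * a2 - k ^ 2 * θ * a6)
    (hw3 : w3 = (2 + 2 * α * k - (1 - θ) * k ^ 2 * β ^ 2) * a1 + (1 - θ) * k ^ 2 * a5)
    (hw4 : w4 = (2 + 2 * α * k - (1 - θ) * k ^ 2 * β ^ 2) * a2 + (1 - θ) * k ^ 2 * a6)
    (hk : 0 ≤ k) (hα : 0 ≤ α) (hθ : 1 / 2 ≤ θ)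
    : 0 ≤ (w2 - 2 * w1) + (w4 - 2 * w3) + (a2 - 2 * a1) := by
  have hP : 0 ≤ a2 - 2 * a1 := by
    rw [ha1, ha2]; exact coeffA2_sub_two_mul_coeffA1_nonneg hh0 hh1
  have hQ : a6 - 2 * a5 ≤ 0 := by
    rw [ha5, ha6]; exact coeffA6_sub_two_mul_coeffA5_nonpos hh0 hh1
  have hθ' : 0 ≤ 2 * θ - 1 := by linarith
  calc (0 : ℝ)
      ≤ (4 + 4 * α * k + (2 * θ - 1) * k ^ 2 * β ^ 2) * (a2 - 2 * a1)
          + (2 * θ - 1) * k ^ 2 * (2 * a5 - a6) := by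
        refine add_nonneg (mul_nonneg ?_ hP) (mul_nonneg (by positivity) (by linarith))
        linarith [mul_nonneg hα hk, mul_nonneg hθ' (mul_nonneg (sq_nonneg k) (sq_nonneg β))]
    _ = (w2 - 2 * w1) + (w4 - 2 * w3) + (a2 - 2 * a1) := by
        rw [hw1, hw2, hw3, hw4]; ring
end

section
/- Let h ∈ (0, 2π/3) and k, α, β, θ ∈ ℝ. Then at φ = π the second Routh–Hurwitz stability inequality holds unconditionally: A − B + C = (w2 − 2w1) − (w4 − 2w3) + (a2 − 2a1) ≥ 0. -/
/-!
Writing `c = cos (h / 2)` and `s = sin (h / 2)`, the expression `A - B + C` is the linear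
combination `k² β² (a2 - 2 a1) + k² (2 a5 - a6)`; the parameters `α` and `θ` cancel. In the
half angle the two brackets are rational in `c` and `s`,
`a2 - 2 a1 = (2c - 1) / (c (4c² - 1))` and `2 a5 - a6 = 3 (c + 1)² (2c - 1) / (4 s² c (4c² - 1))`,
and both are nonnegative because `h < 2π/3` forces `c > 1/2`.
-/

open Real

namespace StabilityCoeff

noncomputable def a1 (h : ℝ) : ℝ := sin (h / 2) ^ 2 / (sin h * sin (3 * h / 2))

noncomputable def a2 (h : ℝ) : ℝ := 2 / (1 + 2 * cos h)

noncomputable def a5 (h : ℝ) : ℝ :=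
  3 * (1 + 3 * cos h) / (16 * sin (h / 2) ^ 2 * (2 * cos (h / 2) + cos (3 * h / 2)))

noncomputable def a6 (h : ℝ) : ℝ :=
  -(3 * cos (h / 2) ^ 2) / (2 * sin (h / 2) ^ 2 * (1 + 2 * cos h))

lemma cos_eq_cos_half (h : ℝ) : cos h = 2 * cos (h / 2) ^ 2 - 1 := by
  rw [← cos_two_mul, mul_div_cancel₀ h two_ne_zero]

lemma sin_eq_sin_half (h : ℝ) : sin h = 2 * sin (h / 2) * cos (h / 2) := by
  rw [← sin_two_mul, mul_div_cancel₀ h two_ne_zero]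

lemma sin_three_half_eq (h : ℝ) : sin (3 * h / 2) = sin (h / 2) * (4 * cos (h / 2) ^ 2 - 1) := by
  rw [mul_div_assoc, sin_three_mul]
  linear_combination (-4 * sin (h / 2)) * sin_sq_add_cos_sq (h / 2)

lemma cos_three_half_eq (h : ℝ) : cos (3 * h / 2) = cos (h / 2) * (4 * cos (h / 2) ^ 2 - 3) := by
  rw [mul_div_assoc, cos_three_mul]
  ring

lemma a2_sub_two_mul_a1_eq {h : ℝ} (hc : cos (h / 2) ≠ 0) (hs : sin (h / 2) ≠ 0) :
    a2 h - 2 * a1 h = (2 * cos (h / 2) - 1) / (cos (h / 2) * (4 * cos (h / 2) ^ 2 - 1)) := by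
  rw [a1, a2, cos_eq_cos_half h, sin_eq_sin_half h, sin_three_half_eq]
  field_simp
  ring

lemma two_mul_a5_sub_a6_eq {h : ℝ} (hc : cos (h / 2) ≠ 0) (hs : sin (h / 2) ≠ 0) :
    2 * a5 h - a6 h = 3 * (cos (h / 2) + 1) ^ 2 * (2 * cos (h / 2) - 1) /
      (4 * sin (h / 2) ^ 2 * cos (h / 2) * (4 * cos (h / 2) ^ 2 - 1)) := by
  have hden : 2 * cos (h / 2) + cos (h / 2) * (4 * cos (h / 2) ^ 2 - 3) =
      cos (h / 2) * (4 * cos (h / 2) ^ 2 - 1) := by ring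
  rw [a5, a6, cos_eq_cos_half h, cos_three_half_eq, hden]
  field_simp
  ring

section

variable {h : ℝ} (hh0 : 0 < h) (hh1 : h < 2 * π / 3)
include hh0 hh1

lemma one_half_lt_cos_half : 1 / 2 < cos (h / 2) := by
  rw [← cos_pi_div_three]
  exact cos_lt_cos_of_nonneg_of_le_pi (by linarith) (by linarith [pi_pos]) (by linarith)

lemma sin_half_pos : 0 < sin (h / 2) :=
  sin_pos_of_pos_of_lt_pi (by linarith) (by linarith [pi_pos])

lemma a2_sub_two_mul_a1_nonneg : 0 ≤ a2 h - 2 * a1 h := by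
  have hc := one_half_lt_cos_half hh0 hh1
  have hc0 : 0 < cos (h / 2) := by linarith
  have h2c : 0 ≤ 2 * cos (h / 2) - 1 := by linarith
  have hD : 0 < 4 * cos (h / 2) ^ 2 - 1 := by nlinarith
  rw [a2_sub_two_mul_a1_eq hc0.ne' (sin_half_pos hh0 hh1).ne']
  positivity

lemma two_mul_a5_sub_a6_nonneg : 0 ≤ 2 * a5 h - a6 h := by
  have hc := one_half_lt_cos_half hh0 hh1
  have hc0 : 0 < cos (h / 2) := by linarith
  have h2c : 0 ≤ 2 * cos (h / 2) - 1 := by linarith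
  have hD : 0 < 4 * cos (h / 2) ^ 2 - 1 := by nlinarith
  rw [two_mul_a5_sub_a6_eq hc0.ne' (sin_half_pos hh0 hh1).ne']
  positivity

end

end StabilityCoeff

theorem stmt_17 (h k α β θ : ℝ) (hh0 : 0 < h) (hh1 : h < 2 * Real.pi / 3)
    (a1 a2 a5 a6 w1 w2 w3 w4 : ℝ)
    (ha1 : a1 = Real.sin (h / 2) ^ 2 / (Real.sin h * Real.sin (3 * h / 2)))
    (ha2 : a2 = 2 / (1 + 2 * Real.cos h))
    (ha5 : a5 = 3 * (1 + 3 * Real.cos h) /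
      (16 * Real.sin (h / 2) ^ 2 * (2 * Real.cos (h / 2) + Real.cos (3 * h / 2))))
    (ha6 : a6 = -(3 * Real.cos (h / 2) ^ 2) / (2 * Real.sin (h / 2) ^ 2 * (1 + 2 * Real.cos h)))
    (hw1 : w1 = (1 + 2 * α * k + k ^ 2 * θ * β ^ 2) * a1 - k ^ 2 * θ * a5)
    (hw2 : w2 = (1 + 2 * α * k + k ^ 2 * θ * β ^ 2) * a2 - k ^ 2 * θ * a6)
    (hw3 : w3 = (2 + 2 * α * k - (1 - θ) * k ^ 2 * β ^ 2) * a1 + (1 - θ) * k ^ 2 * a5)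
    (hw4 : w4 = (2 + 2 * α * k - (1 - θ) * k ^ 2 * β ^ 2) * a2 + (1 - θ) * k ^ 2 * a6)
    : 0 ≤ (w2 - 2 * w1) - (w4 - 2 * w3) + (a2 - 2 * a1) := by
  have hC : 0 ≤ a2 - 2 * a1 := by
    rw [ha1, ha2]
    exact StabilityCoeff.a2_sub_two_mul_a1_nonneg hh0 hh1
  have hB : 0 ≤ 2 * a5 - a6 := by
    rw [ha5, ha6]
    exact StabilityCoeff.two_mul_a5_sub_a6_nonneg hh0 hh1
  have key : (w2 - 2 * w1) - (w4 - 2 * w3) + (a2 - 2 * a1) =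
      k ^ 2 * β ^ 2 * (a2 - 2 * a1) + k ^ 2 * (2 * a5 - a6) := by
    rw [hw1, hw2, hw3, hw4]
    ring
  rw [key]
  positivity
end
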